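/- Let P₀ and P₁ be probability measures on ℝ with finite second moments and quantile functions F₀⁻¹, F₁⁻¹. For every coupling J of P₀ and P₁, ∫ (y₁ − y₀)² dJ(y₀, y₁) ≤ ∫₀¹ (F₁⁻¹(u) − F₀⁻¹(1 − u))² du, and equality holds when J is the antitone coupling, the pushforward of Lebesgue measure on (0,1) under u ↦ (F₀⁻¹(1 − u), F₁⁻¹(u)). That is, the antitone coupling maximizes the quadratic treatment effect E[(Y₁ − Y₀)²] over all couplings. -/

import Mathlib

open MeasureTheory Set Filter

noncomputable def cdf (P : MeasureTheory.Measure ℝ) (y : ℝ) : ℝ := (P (Set.Iic y)).toReal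

noncomputable def quantile (P : MeasureTheory.Measure ℝ) (u : ℝ) : ℝ :=
  sInf {y : ℝ | u ≤ cdf P y}

/-!
Since `(y₁ - y₀)²` is the area of the square `[min y₀ y₁, max y₀ y₁)²`, Tonelli's theorem writes
`E_J (Y₁ - Y₀)²` as `∫ J (crossing z) dz`, where `crossing z` is the event that both coordinates of
`z` lie between `Y₀` and `Y₁`. That event is the disjoint union of `{Y₀ ≤ m, Y₁ > M}` and
`{Y₀ > M, Y₁ ≤ m}` (`m`, `M` the min and max of `z`), and every coupling gives each of them at most
its Fréchet bound `min (P₀ _) (P₁ _)`. The antitone coupling attains both bounds: under it,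
with `u ∈ (0, 1)` uniform, the two defining events are upper (resp. lower) intervals in `u`,
hence nested.
-/

local notation "𝕌" => volume.restrict (Ioo (0 : ℝ) 1)

instance : IsProbabilityMeasure 𝕌 := ⟨by simp [Real.volume_Ioo]⟩

lemma measurePreserving_one_sub : MeasurePreserving (fun u : ℝ => 1 - u) 𝕌 𝕌 := by
  simpa using (Measure.measurePreserving_sub_left volume (1 : ℝ)).restrict_preimage
    (measurableSet_Ioo (a := (0 : ℝ)) (b := 1))

lemma volume_restrict_Ioo_zero_one_Iic {c : ℝ} (hc : c ≤ 1) : 𝕌 (Iic c) = ENNReal.ofReal c := by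
  rw [measure_congr Iio_ae_eq_Iic.symm, Measure.restrict_apply' measurableSet_Ioo, inter_comm,
    Ioo_inter_Iio, min_eq_right hc, Real.volume_Ioo, sub_zero]

lemma measure_inter_eq_min_of_ae_eq {α : Type*} [MeasurableSpace α] {μ : Measure α}
    {s t s' t' : Set α} (hs : s =ᵐ[μ] s') (ht : t =ᵐ[μ] t') (hst : s' ⊆ t' ∨ t' ⊆ s') :
    μ (s ∩ t) = min (μ s) (μ t) := by
  rw [measure_congr (hs.inter ht), measure_congr hs, measure_congr ht]
  rcases hst with h | h
  · rw [inter_eq_left.2 h, min_eq_left (measure_mono h)]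
  · rw [inter_eq_right.2 h, min_eq_right (measure_mono h)]

section Quantile

variable {P : Measure ℝ} [IsProbabilityMeasure P]

lemma cdf_eq_probabilityTheory_cdf : cdf P = ProbabilityTheory.cdf P := by
  funext y
  rw [cdf, ProbabilityTheory.cdf_eq_real, measureReal_def]

lemma quantile_le_iff {u y : ℝ} (hu : u ∈ Ioo (0 : ℝ) 1) : quantile P u ≤ y ↔ u ≤ cdf P y := by
  rw [quantile, cdf_eq_probabilityTheory_cdf]
  set F := ProbabilityTheory.cdf P
  set S := {y : ℝ | u ≤ F y}
  have hne : S.Nonempty :=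
    ((ProbabilityTheory.tendsto_cdf_atTop P).eventually (eventually_gt_nhds hu.2)).exists.imp
      fun _ h => h.le
  have hbdd : BddBelow S := by
    obtain ⟨z, hz⟩ :=
      ((ProbabilityTheory.tendsto_cdf_atBot P).eventually (eventually_lt_nhds hu.1)).exists
    exact ⟨z, fun w hw => le_of_not_gt fun hwz => (hw.trans (F.mono hwz.le)).not_gt hz⟩
  have hmem : sInf S ∈ S := by
    refine ge_of_tendsto ((F.right_continuous _).mono Ioi_subset_Ici_self) ?_
    filter_upwards [self_mem_nhdsWithin] with z hz
    obtain ⟨s, hsS, hs⟩ := (csInf_lt_iff hbdd hne).mp hz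
    exact hsS.trans (F.mono hs.le)
  exact ⟨fun h => hmem.trans (F.mono h), fun h => csInf_le hbdd h⟩

lemma monotoneOn_quantile : MonotoneOn (quantile P) (Ioo 0 1) :=
  fun _ hu _ hv huv => (quantile_le_iff hu).2 (huv.trans ((quantile_le_iff hv).1 le_rfl))

lemma aemeasurable_quantile : AEMeasurable (quantile P) 𝕌 :=
  aemeasurable_restrict_of_monotoneOn measurableSet_Ioo monotoneOn_quantile

lemma aemeasurable_quantile_one_sub : AEMeasurable (fun u => quantile P (1 - u)) 𝕌 :=
  (aemeasurable_quantile (P := P)).comp_quasiMeasurePreserving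
    measurePreserving_one_sub.quasiMeasurePreserving

lemma preimage_quantile_Iic_ae_eq (y : ℝ) : quantile P ⁻¹' Iic y =ᵐ[𝕌] Iic (cdf P y) := by
  filter_upwards [ae_restrict_mem measurableSet_Ioo] with u hu
  exact propext (quantile_le_iff hu)

lemma preimage_quantile_Ioi_ae_eq (y : ℝ) : quantile P ⁻¹' Ioi y =ᵐ[𝕌] Ioi (cdf P y) := by
  simpa only [← preimage_compl, compl_Iic] using (preimage_quantile_Iic_ae_eq (P := P) y).compl

lemma preimage_quantile_one_sub_Iic_ae_eq (y : ℝ) :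
    (fun u => quantile P (1 - u)) ⁻¹' Iic y =ᵐ[𝕌] Ici (1 - cdf P y) := by
  simpa only [preimage_preimage, preimage_const_sub_Iic] using
    measurePreserving_one_sub.quasiMeasurePreserving.preimage_ae_eq (preimage_quantile_Iic_ae_eq y)

lemma preimage_quantile_one_sub_Ioi_ae_eq (y : ℝ) :
    (fun u => quantile P (1 - u)) ⁻¹' Ioi y =ᵐ[𝕌] Iio (1 - cdf P y) := by
  simpa only [preimage_preimage, preimage_const_sub_Ioi] using
    measurePreserving_one_sub.quasiMeasurePreserving.preimage_ae_eq (preimage_quantile_Ioi_ae_eq y)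

lemma map_quantile : Measure.map (quantile P) 𝕌 = P := by
  refine Measure.ext_of_Iic _ _ fun y => ?_
  rw [Measure.map_apply_of_aemeasurable aemeasurable_quantile measurableSet_Iic,
    measure_congr (preimage_quantile_Iic_ae_eq y), cdf_eq_probabilityTheory_cdf,
    volume_restrict_Ioo_zero_one_Iic (ProbabilityTheory.cdf_le_one P y),
    ProbabilityTheory.ofReal_cdf]

lemma map_quantile_one_sub : Measure.map (fun u => quantile P (1 - u)) 𝕌 = P := by
  have h := AEMeasurable.map_map_of_aemeasurable
    (measurePreserving_one_sub.map_eq ▸ aemeasurable_quantile (P := P))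
    measurePreserving_one_sub.measurable.aemeasurable
  rwa [measurePreserving_one_sub.map_eq, map_quantile, eq_comm] at h

end Quantile

noncomputable def antitoneCoupling (P0 P1 : Measure ℝ) : Measure (ℝ × ℝ) :=
  Measure.map (fun u => (quantile P0 (1 - u), quantile P1 u)) 𝕌

section AntitoneCoupling

variable {P0 P1 : Measure ℝ} [IsProbabilityMeasure P0] [IsProbabilityMeasure P1]

lemma aemeasurable_quantile_one_sub_prodMk_quantile :
    AEMeasurable (fun u => (quantile P0 (1 - u), quantile P1 u)) 𝕌 :=
  aemeasurable_quantile_one_sub.prodMk aemeasurable_quantile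

instance : IsProbabilityMeasure (antitoneCoupling P0 P1) :=
  Measure.isProbabilityMeasure_map aemeasurable_quantile_one_sub_prodMk_quantile

lemma antitoneCoupling_map_fst : (antitoneCoupling P0 P1).map Prod.fst = P0 := by
  rw [antitoneCoupling, AEMeasurable.map_map_of_aemeasurable measurable_fst.aemeasurable
    aemeasurable_quantile_one_sub_prodMk_quantile]
  exact map_quantile_one_sub

lemma antitoneCoupling_map_snd : (antitoneCoupling P0 P1).map Prod.snd = P1 := by
  rw [antitoneCoupling, AEMeasurable.map_map_of_aemeasurable measurable_snd.aemeasurable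
    aemeasurable_quantile_one_sub_prodMk_quantile]
  exact map_quantile

lemma antitoneCoupling_prod {A B : Set ℝ} (hA : MeasurableSet A) (hB : MeasurableSet B) :
    antitoneCoupling P0 P1 (A ×ˢ B)
      = 𝕌 ((fun u => quantile P0 (1 - u)) ⁻¹' A ∩ quantile P1 ⁻¹' B) := by
  rw [antitoneCoupling, Measure.map_apply_of_aemeasurable
    aemeasurable_quantile_one_sub_prodMk_quantile (hA.prod hB), mk_preimage_prod]

lemma antitoneCoupling_Iic_prod_Ioi (a b : ℝ) :
    antitoneCoupling P0 P1 (Iic a ×ˢ Ioi b) = min (P0 (Iic a)) (P1 (Ioi b)) := by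
  rw [antitoneCoupling_prod measurableSet_Iic measurableSet_Ioi,
    measure_inter_eq_min_of_ae_eq (preimage_quantile_one_sub_Iic_ae_eq a)
      (preimage_quantile_Ioi_ae_eq b) ((isUpperSet_Ici _).total (isUpperSet_Ioi _)),
    ← Measure.map_apply_of_aemeasurable aemeasurable_quantile_one_sub measurableSet_Iic,
    ← Measure.map_apply_of_aemeasurable aemeasurable_quantile measurableSet_Ioi,
    map_quantile_one_sub, map_quantile]

lemma antitoneCoupling_Ioi_prod_Iic (a b : ℝ) :
    antitoneCoupling P0 P1 (Ioi b ×ˢ Iic a) = min (P0 (Ioi b)) (P1 (Iic a)) := by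
  rw [antitoneCoupling_prod measurableSet_Ioi measurableSet_Iic,
    measure_inter_eq_min_of_ae_eq (preimage_quantile_one_sub_Ioi_ae_eq b)
      (preimage_quantile_Iic_ae_eq a) ((isLowerSet_Iio _).total (isLowerSet_Iic _)),
    ← Measure.map_apply_of_aemeasurable aemeasurable_quantile_one_sub measurableSet_Ioi,
    ← Measure.map_apply_of_aemeasurable aemeasurable_quantile measurableSet_Iic,
    map_quantile_one_sub, map_quantile]

end AntitoneCoupling

lemma measure_prod_le_min_map {α β : Type*} [MeasurableSpace α] [MeasurableSpace β]
    (J : Measure (α × β)) (A : Set α) (B : Set β) :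
    J (A ×ˢ B) ≤ min (J.map Prod.fst A) (J.map Prod.snd B) :=
  le_min
    ((measure_mono fun _ hp => hp.1).trans (Measure.le_map_apply measurable_fst.aemeasurable A))
    ((measure_mono fun _ hp => hp.2).trans (Measure.le_map_apply measurable_snd.aemeasurable B))

def crossing (z : ℝ × ℝ) : Set (ℝ × ℝ) :=
  Iic (min z.1 z.2) ×ˢ Ioi (max z.1 z.2) ∪ Ioi (max z.1 z.2) ×ˢ Iic (min z.1 z.2)

lemma mem_crossing_iff {p z : ℝ × ℝ} :
    p ∈ crossing z ↔ z ∈ Ico (min p.1 p.2) (max p.1 p.2) ×ˢ Ico (min p.1 p.2) (max p.1 p.2) := by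
  simp only [crossing, mem_union, mem_prod, mem_Iic, mem_Ioi, mem_Ico]
  grind

lemma measurableSet_crossing : MeasurableSet {q : (ℝ × ℝ) × (ℝ × ℝ) | q.1 ∈ crossing q.2} := by
  simp only [crossing, mem_union, mem_prod, mem_Iic, mem_Ioi]
  measurability

lemma volume_setOf_mem_crossing (p : ℝ × ℝ) :
    volume {z | p ∈ crossing z} = ENNReal.ofReal ((p.2 - p.1) ^ 2) := by
  simp_rw [mem_crossing_iff, ofPred_mem_eq]
  rw [Measure.volume_eq_prod, Measure.prod_prod, Real.volume_Ico, max_sub_min_eq_abs,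
    ← ENNReal.ofReal_mul (abs_nonneg _), abs_mul_abs_self]
  ring_nf

lemma lintegral_sq_sub_eq_lintegral_measure_crossing (ν : Measure (ℝ × ℝ)) [SFinite ν] :
    ∫⁻ p, ENNReal.ofReal ((p.2 - p.1) ^ 2) ∂ν = ∫⁻ z, ν (crossing z) := by
  simp_rw [← volume_setOf_mem_crossing]
  exact (Measure.prod_apply measurableSet_crossing).symm.trans
    (Measure.prod_apply_symm measurableSet_crossing)

lemma measure_crossing_le_antitoneCoupling {P0 P1 : Measure ℝ} [IsProbabilityMeasure P0]
    [IsProbabilityMeasure P1] {J : Measure (ℝ × ℝ)} (h0 : J.map Prod.fst = P0)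
    (h1 : J.map Prod.snd = P1) (z : ℝ × ℝ) :
    J (crossing z) ≤ antitoneCoupling P0 P1 (crossing z) := by
  have hdisj : Disjoint (Iic (min z.1 z.2) ×ˢ Ioi (max z.1 z.2))
      (Ioi (max z.1 z.2) ×ˢ Iic (min z.1 z.2)) :=
    disjoint_prod.2 (Or.inl (Iic_disjoint_Ioi min_le_max))
  rw [crossing, measure_union (μ := antitoneCoupling P0 P1) hdisj
    (measurableSet_Ioi.prod measurableSet_Iic), antitoneCoupling_Iic_prod_Ioi,
    antitoneCoupling_Ioi_prod_Iic, ← h0, ← h1]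
  exact (measure_union_le _ _).trans
    (add_le_add (measure_prod_le_min_map _ _ _) (measure_prod_le_min_map _ _ _))

lemma integrable_sq_sub_of_map {J : Measure (ℝ × ℝ)}
    (h0 : Integrable (fun y : ℝ => y ^ 2) (J.map Prod.fst))
    (h1 : Integrable (fun y : ℝ => y ^ 2) (J.map Prod.snd)) :
    Integrable (fun p : ℝ × ℝ => (p.2 - p.1) ^ 2) J := by
  have hsum := ((h0.comp_aemeasurable measurable_fst.aemeasurable).add
    (h1.comp_aemeasurable measurable_snd.aemeasurable)).const_mul 2
  refine hsum.mono' (by fun_prop) (ae_of_all _ fun p => ?_)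
  rw [Real.norm_eq_abs, abs_of_nonneg (sq_nonneg _)]
  simp only [Function.comp_apply, Pi.add_apply]
  nlinarith [sq_nonneg (p.1 + p.2)]

lemma integral_le_integral_of_lintegral_ofReal_le {α β : Type*} [MeasurableSpace α]
    [MeasurableSpace β] {μ : Measure α} {ν : Measure β} {f : α → ℝ} {g : β → ℝ} (hf0 : 0 ≤ f)
    (hf : AEStronglyMeasurable f μ) (hg0 : 0 ≤ g) (hg : Integrable g ν)
    (h : ∫⁻ a, ENNReal.ofReal (f a) ∂μ ≤ ∫⁻ b, ENNReal.ofReal (g b) ∂ν) :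
    ∫ a, f a ∂μ ≤ ∫ b, g b ∂ν := by
  rw [integral_eq_lintegral_of_nonneg_ae (ae_of_all _ hf0) hf,
    integral_eq_lintegral_of_nonneg_ae (ae_of_all _ hg0) hg.1]
  exact ENNReal.toReal_mono hg.lintegral_lt_top.ne h

/-- The antitone coupling maximizes the quadratic treatment effect over all couplings. -/
theorem antitone_maximizes_quadratic_effect
    (P0 P1 : Measure ℝ) [IsProbabilityMeasure P0] [IsProbabilityMeasure P1]
    (hm0 : Integrable (fun y : ℝ => y ^ 2) P0) (hm1 : Integrable (fun y : ℝ => y ^ 2) P1)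
    (J : Measure (ℝ × ℝ)) [IsProbabilityMeasure J]
    (h0 : J.map Prod.fst = P0) (h1 : J.map Prod.snd = P1) :
    ((∫ p : ℝ × ℝ, (p.2 - p.1) ^ 2 ∂J)
        ≤ ∫ u in Ioo (0:ℝ) 1, (quantile P1 u - quantile P0 (1 - u)) ^ 2) ∧
    (J = (volume.restrict (Ioo (0:ℝ) 1)).map
        (fun u => (quantile P0 (1 - u), quantile P1 u)) →
      (∫ p : ℝ × ℝ, (p.2 - p.1) ^ 2 ∂J)
        = ∫ u in Ioo (0:ℝ) 1, (quantile P1 u - quantile P0 (1 - u)) ^ 2) := by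
  have hK : ∫ p : ℝ × ℝ, (p.2 - p.1) ^ 2 ∂(antitoneCoupling P0 P1)
      = ∫ u in Ioo (0:ℝ) 1, (quantile P1 u - quantile P0 (1 - u)) ^ 2 :=
    integral_map aemeasurable_quantile_one_sub_prodMk_quantile (by fun_prop)
  refine ⟨?_, fun hJ => by rw [hJ]; exact hK⟩
  rw [← hK]
  refine integral_le_integral_of_lintegral_ofReal_le (fun p => sq_nonneg _) (by fun_prop)
    (fun p => sq_nonneg _) (integrable_sq_sub_of_map (by rwa [antitoneCoupling_map_fst])
      (by rwa [antitoneCoupling_map_snd])) ?_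
  rw [lintegral_sq_sub_eq_lintegral_measure_crossing,
    lintegral_sq_sub_eq_lintegral_measure_crossing]
  exact lintegral_mono (measure_crossing_le_antitoneCoupling h0 h1)
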